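/- arXiv:1308.0189 — 2 statements merged into one kernel-verified Lean document; each statement's English description precedes it below -/
import Mathlib

section
/- Let V be a finite type and consider a run of the queue process given by states (Q_i, E_i) ∈ Finset V × Finset (V × V) and head elements h_i ∈ Q_i defined whenever Q_i ≠ ∅, where at each step i with Q_i ≠ ∅ either Q_{i+1} = Q_i.erase h_i and E_{i+1} = E_i (a pop), or there is an edge e_i ∈ E_i with second coordinate h_i such that E_{i+1} = E_i.erase e_i and Q_{i+1} = Q_i (an edge deletion). Then for every node x ∈ V, the number of indices i at which h_i = x is at most (the number of edges in E₀ whose second coordinate is x) + 1. In particular, if every node has at most D incoming edges in E₀, no node is at the head of the queue more than D + 1 times. (This is the claim in the termination proof that, since the degree of each node is O(log n), a node cannot be at the head of the queue more than O(log n) times.) -/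
/-- In a run of the queue process where at each step with a nonempty queue the
head `h i ∈ Q_i` is either popped (edges unchanged) or an edge of `E_i`
incoming to `h i` is deleted (queue unchanged), and the process halts once the
queue is empty, every node `x` is at the head of the queue at most
`(number of edges of E₀ into x) + 1` times; in particular, if every node has
at most `D` incoming edges in `E₀`, no node is at the head more than `D + 1`
times. -/
theorem head_occurrences_bound {V : Type*} [Fintype V] [DecidableEq V]
    (s : ℕ → Finset V × Finset (V × V)) (h : ℕ → V)
    (hmem : ∀ i : ℕ, (s i).1.Nonempty → h i ∈ (s i).1)
    (hstep : ∀ i : ℕ, (s i).1.Nonempty →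
      ((s (i + 1)).1 = (s i).1.erase (h i) ∧ (s (i + 1)).2 = (s i).2) ∨
      (∃ e ∈ (s i).2, e.2 = h i ∧
        (s (i + 1)).2 = (s i).2.erase e ∧ (s (i + 1)).1 = (s i).1))
    (hhalt : ∀ i : ℕ, (s i).1 = ∅ → s (i + 1) = s i) :
    (∀ x : V,
      {i : ℕ | (s i).1.Nonempty ∧ h i = x}.Finite ∧
      {i : ℕ | (s i).1.Nonempty ∧ h i = x}.ncard ≤
        ((s 0).2.filter (fun e => e.2 = x)).card + 1) ∧
    (∀ D : ℕ, (∀ y : V, ((s 0).2.filter (fun e => e.2 = y)).card ≤ D) →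
      ∀ x : V, {i : ℕ | (s i).1.Nonempty ∧ h i = x}.ncard ≤ D + 1) := by
  have main : ∀ x : V, {i : ℕ | (s i).1.Nonempty ∧ h i = x}.Finite ∧
      {i : ℕ | (s i).1.Nonempty ∧ h i = x}.ncard ≤
        ((s 0).2.filter (fun e => e.2 = x)).card + 1 := by
    intro x
    set S := {i : ℕ | (s i).1.Nonempty ∧ h i = x} with hS
    set f : ℕ → ℕ :=
      fun i => ((s i).2.filter (fun e => e.2 = x)).card +
        (if x ∈ (s i).1 then 1 else 0) with hf
    have hdec : ∀ i, f (i + 1) ≤ f i := by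
      intro i
      by_cases hne : (s i).1.Nonempty
      · rcases hstep i hne with ⟨hQ, hE⟩ | ⟨e, heE, he2, hE, hQ⟩
        · simp only [hf, hQ, hE]
          have : (if x ∈ (s i).1.erase (h i) then 1 else 0) ≤
              (if x ∈ (s i).1 then 1 else 0) := by
            split
            · rw [if_pos (Finset.mem_of_mem_erase (by assumption))]
            · omega
          omega
        · simp only [hf, hQ, hE]
          have : ((s i).2.erase e).filter (fun e => e.2 = x) ⊆
              (s i).2.filter (fun e => e.2 = x) :=
            Finset.filter_subset_filter _ (Finset.erase_subset _ _)
          have := Finset.card_le_card this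
          omega
      · have := hhalt i (Finset.not_nonempty_iff_eq_empty.mp hne)
        simp [hf, this]
    have hstrict : ∀ i, (s i).1.Nonempty → h i = x → f (i + 1) < f i := by
      intro i hne hx
      rcases hstep i hne with ⟨hQ, hE⟩ | ⟨e, heE, he2, hE, hQ⟩
      · have hxmem : x ∈ (s i).1 := hx ▸ hmem i hne
        have hxnot : x ∉ (s i).1.erase (h i) := by
          rw [hx]; exact Finset.notMem_erase _ _
        simp only [hf, hQ, hE, if_pos hxmem, if_neg hxnot]
        omega
      · have hemem : e ∈ (s i).2.filter (fun e => e.2 = x) := by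
          simp [Finset.mem_filter, heE, he2, hx]
        have hpos : 0 < ((s i).2.filter (fun e => e.2 = x)).card :=
          Finset.card_pos.mpr ⟨e, hemem⟩
        have hcard : (((s i).2.erase e).filter (fun e => e.2 = x)).card =
            ((s i).2.filter (fun e => e.2 = x)).card - 1 := by
          rw [Finset.filter_erase, Finset.card_erase_of_mem hemem]
        simp only [hf, hQ, hE, hcard]
        omega
    have key : ∀ n,
        ((Finset.range n).filter (fun i => (s i).1.Nonempty ∧ h i = x)).card
          + f n ≤ f 0 := by
      intro n
      induction n with
      | zero => simp
      | succ n ih =>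
        rw [Finset.range_add_one, Finset.filter_insert]
        by_cases hc : (s n).1.Nonempty ∧ h n = x
        · rw [if_pos hc, Finset.card_insert_of_notMem (by simp)]
          have := hstrict n hc.1 hc.2
          omega
        · rw [if_neg hc]
          have := hdec n
          omega
    have hB : ∀ t : Finset ℕ, ↑t ⊆ S → t.card ≤ f 0 := by
      intro t ht
      have hsub : t ⊆ (Finset.range (t.sup id + 1)).filter
          (fun i => (s i).1.Nonempty ∧ h i = x) := by
        intro i hi
        simp only [Finset.mem_filter, Finset.mem_range]
        refine ⟨Nat.lt_succ_of_le (Finset.le_sup (f := id) hi), ht hi⟩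
      have := Finset.card_le_card hsub
      have := key (t.sup id + 1)
      omega
    have hfin : S.Finite := by
      by_contra hinf
      have hinf' : S.Infinite := hinf
      obtain ⟨t, hts, htc⟩ := hinf'.exists_subset_card_eq (f 0 + 1)
      have := hB t hts
      omega
    refine ⟨hfin, ?_⟩
    have h1 : f 0 ≤ ((s 0).2.filter (fun e => e.2 = x)).card + 1 := by
      simp only [hf]; split <;> omega
    have h2 := hB hfin.toFinset (by simp)
    rw [Set.ncard_eq_toFinset_card _ hfin]
    omega
  refine ⟨main, fun D hD x => ?_⟩
  have := (main x).2
  have := hD x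
  omega
end

section
/- Let V be a finite type, E ⊆ V × V an edge set, w : V → V → ℝ≥0∞ a weight function, a, b ∈ V, and let E' = E ∪ {(a, b)}. Then for every source s and every vertex y, cost_{E'}(s, y) = min( cost_E(s, y), cost_E(s, a) + w(a, b) + cost_E(b, y) ). (This characterizes the effect of the insert_edge_SSSP operation used by LBT-RRT: after inserting a single edge (a, b), the new shortest-path cost to each node is the minimum of its old cost and the cost of the best path that passes through the new edge, and in particular the set of nodes whose cost decreases is exactly the set where the second term is strictly smaller.) -/
open scoped ENNReal

/-- The cost of a path starting at `u` and continuing through the list of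
vertices `p`, summing the weights of consecutive edges. -/
noncomputable def pathCost {V : Type*} (w : V → V → ℝ≥0∞) : V → List V → ℝ≥0∞
  | _, [] => 0
  | u, v :: rest => w u v + pathCost w v rest

/-- `p` is the (tail of a) path in the edge set `E` from `s` to `x`:
consecutive vertices of `s :: p` are edges of `E` and the last vertex is `x`. -/
def IsPathIn {V : Type*} (E : Set (V × V)) (s x : V) (p : List V) : Prop :=
  List.Chain (fun a b => (a, b) ∈ E) s p ∧ (s :: p).getLast (List.cons_ne_nil s p) = x

/-- The shortest-path cost from `s` to `x` in the graph with edge set `E`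
and weights `w`: the infimum in `ℝ≥0∞` of path costs over all paths from `s`
to `x` (so `∞` if no path exists, and `0` from `s` to `s` via the empty path). -/
noncomputable def spCost {V : Type*} (E : Set (V × V)) (w : V → V → ℝ≥0∞)
    (s x : V) : ℝ≥0∞ :=
  ⨅ p : { p : List V // IsPathIn E s x p }, pathCost w s p.val

/-! Adding edges only adds paths, and the triangle inequality through the new edge gives the upper
bound. For the lower bound, the right-hand side `g s`, as a function of the source, vanishes at `y`
and satisfies `g u ≤ w u v + g v` along every edge of the enlarged graph (for the new edge `(a, b)`
through its second term, using `cost_E(a, a) = 0`); summing this inequality along any path from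
`s` to `y` bounds the path's cost from below by `g s`. -/

section

variable {V : Type*} {E F : Set (V × V)} {w : V → V → ℝ≥0∞} {s m x u v : V} {p q : List V}

theorem pathCost_append (w : V → V → ℝ≥0∞) (s : V) (p q : List V) :
    pathCost w s (p ++ q) =
      pathCost w s p + pathCost w ((s :: p).getLast (List.cons_ne_nil s p)) q := by
  induction p generalizing s with
  | nil => simp [pathCost]
  | cons v p ih => simp [pathCost, ih, add_assoc]

theorem isPathIn_nil (E : Set (V × V)) (s : V) : IsPathIn E s s [] :=
  ⟨.singleton s, rfl⟩

theorem IsPathIn.eq_of_nil (hp : IsPathIn E s x []) : s = x := hp.2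

theorem IsPathIn.cons (h : (u, v) ∈ E) (hp : IsPathIn E v x p) : IsPathIn E u x (v :: p) :=
  ⟨.cons_cons h hp.1, by simpa using hp.2⟩

theorem IsPathIn.of_cons (hp : IsPathIn E u x (v :: p)) : (u, v) ∈ E ∧ IsPathIn E v x p :=
  ⟨(List.isChain_cons_cons.1 hp.1).1, (List.isChain_cons_cons.1 hp.1).2, by simpa using hp.2⟩

theorem IsPathIn.mono (hEF : E ⊆ F) (hp : IsPathIn E s x p) : IsPathIn F s x p :=
  ⟨List.IsChain.imp (fun _ _ h => hEF h) hp.1, hp.2⟩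

theorem IsPathIn.append (hp : IsPathIn E s m p) (hq : IsPathIn E m x q) :
    IsPathIn E s x (p ++ q) := by
  induction p generalizing s with
  | nil => rwa [hp.eq_of_nil]
  | cons v p ih =>
    obtain ⟨hsv, hp⟩ := hp.of_cons
    exact (ih hp).cons hsv

theorem spCost_le_pathCost (hp : IsPathIn E s x p) : spCost E w s x ≤ pathCost w s p :=
  iInf_le (fun p : {p // IsPathIn E s x p} => pathCost w s p.val) ⟨p, hp⟩

theorem spCost_self : spCost E w s s = 0 :=
  nonpos_iff_eq_zero.1 (spCost_le_pathCost (isPathIn_nil E s))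

theorem spCost_le_of_mem (h : (u, v) ∈ E) : spCost E w u v ≤ w u v := by
  simpa [pathCost] using spCost_le_pathCost (w := w) ((isPathIn_nil E v).cons h)

theorem spCost_anti (hEF : E ⊆ F) : spCost F w s x ≤ spCost E w s x :=
  le_iInf fun ⟨_, hp⟩ => spCost_le_pathCost (hp.mono hEF)

theorem spCost_triangle : spCost E w s x ≤ spCost E w s m + spCost E w m x := by
  simp only [spCost, ENNReal.iInf_add, ENNReal.add_iInf]
  refine le_iInf₂ fun ⟨q, hq⟩ ⟨p, hp⟩ => ?_
  calc spCost E w s x ≤ pathCost w s (p ++ q) := spCost_le_pathCost (hp.append hq)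
    _ = pathCost w s p + pathCost w m q := by rw [pathCost_append, hp.2]

theorem spCost_le_add_of_mem (h : (u, v) ∈ E) : spCost E w u x ≤ w u v + spCost E w v x :=
  spCost_triangle.trans (add_le_add (spCost_le_of_mem h) le_rfl)

theorem le_spCost_of_potential {g : V → ℝ≥0∞} (hx : g x = 0)
    (hg : ∀ u v, (u, v) ∈ E → g u ≤ w u v + g v) : g s ≤ spCost E w s x := by
  suffices h : ∀ p s, IsPathIn E s x p → g s ≤ pathCost w s p from
    le_iInf fun p => h p.1 s p.2
  intro p
  induction p with
  | nil => intro s hp; simp [hp.eq_of_nil, hx]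
  | cons v p ih =>
    intro s hp
    obtain ⟨hsv, hp⟩ := hp.of_cons
    exact (hg s v hsv).trans (add_le_add le_rfl (ih v hp))

end

section

variable {V : Type*} {E : Set (V × V)} {w : V → V → ℝ≥0∞} {a b s y : V}

theorem spCost_union_singleton_le :
    spCost (E ∪ {(a, b)}) w s y ≤
      min (spCost E w s y) (spCost E w s a + w a b + spCost E w b y) := by
  set F := E ∪ {(a, b)}
  refine le_min (spCost_anti Set.subset_union_left) ?_
  calc spCost F w s y ≤ spCost F w s a + spCost F w a b + spCost F w b y :=
        spCost_triangle.trans (add_le_add spCost_triangle le_rfl)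
    _ ≤ spCost E w s a + w a b + spCost E w b y := by
        gcongr
        · exact spCost_anti Set.subset_union_left
        · exact spCost_le_of_mem (Set.mem_union_right E rfl)
        · exact spCost_anti Set.subset_union_left

theorem le_spCost_union_singleton :
    min (spCost E w s y) (spCost E w s a + w a b + spCost E w b y) ≤
      spCost (E ∪ {(a, b)}) w s y := by
  refine le_spCost_of_potential
    (g := fun u => min (spCost E w u y) (spCost E w u a + w a b + spCost E w b y))
    (by simp [spCost_self]) fun u v huv => ?_
  rcases huv with huv | ⟨rfl, rfl⟩
  · rw [add_min, ← add_assoc, ← add_assoc]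
    exact min_le_min (spCost_le_add_of_mem huv)
      (add_le_add (add_le_add (spCost_le_add_of_mem huv) le_rfl) le_rfl)
  · have hb : min (spCost E w b y) (spCost E w b a + w a b + spCost E w b y) = spCost E w b y :=
      min_eq_left le_add_self
    calc min (spCost E w a y) (spCost E w a a + w a b + spCost E w b y)
        ≤ spCost E w a a + w a b + spCost E w b y := min_le_right _ _
      _ = w a b + min (spCost E w b y) (spCost E w b a + w a b + spCost E w b y) := by
        rw [hb, spCost_self, zero_add]

end

theorem spCost_insert_edge_general {V : Type*}
    (E : Set (V × V)) (w : V → V → ℝ≥0∞) (a b : V) :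
    ∀ s y : V,
      spCost (E ∪ {(a, b)}) w s y =
        min (spCost E w s y) (spCost E w s a + w a b + spCost E w b y) :=
  fun _ _ => le_antisymm spCost_union_singleton_le le_spCost_union_singleton

/-- Effect of inserting a single edge `(a, b)` on shortest-path costs: the new
cost to each node `y` is the minimum of its old cost and the cost of the best
path passing through the new edge. -/
theorem spCost_insert_edge {V : Type*} [Fintype V]
    (E : Set (V × V)) (w : V → V → ℝ≥0∞) (a b : V) :
    ∀ s y : V,
      spCost (E ∪ {(a, b)}) w s y =
        min (spCost E w s y) (spCost E w s a + w a b + spCost E w b y) :=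
  spCost_insert_edge_general E w a b
end
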